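/- arXiv:2602.07254 — 6 statements merged into one kernel-verified Lean document; each statement's English description precedes it below -/
import Mathlib

section
/- Let q be a prime power and F_q the finite field with q elements. Let a, b ∈ F_q with a ≠ 0, b ≠ 0, and a ≠ -b. Then the number of x ∈ F_q with a*x^3 - b*x^2 + x + 1 = 0 equals the number of x ∈ F_q with (a+b)*x^3 + (a+b^2)*x^2 + 2*a*b*x + a^2 = 0. -/
/-!
The Möbius transformation `x ↦ a / (a x - b)`, with inverse `y ↦ (b y + a) / (a y)`, carries the
roots of the first cubic onto those of the second: clearing denominators, the second cubic at
`a / (a x - b)` is `a ^ 4 / (a x - b) ^ 3` times the first cubic at `x`.  The excluded poles are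
harmless, since `x = b / a` is a root of the first cubic only when `x = -1` and `a = -b`, and `0`
is a root of the second only when `a = 0`.
-/

open Finset

namespace CubicRootBijection

variable {F : Type*} [Field F] {a b x y : F}

def cubicLeft (a b x : F) : F := a * x ^ 3 - b * x ^ 2 + x + 1

def cubicRight (a b y : F) : F :=
  (a + b) * y ^ 3 + (a + b ^ 2) * y ^ 2 + 2 * a * b * y + a ^ 2

theorem mul_sub_ne_zero_of_cubicLeft_eq_zero (hab : a ≠ -b) (hx : cubicLeft a b x = 0) :
    a * x - b ≠ 0 := by
  intro hd
  have hx1 : x = -1 := by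
    unfold cubicLeft at hx
    linear_combination hx - x ^ 2 * hd
  exact hab (by linear_combination -hd + a * hx1)

theorem ne_zero_of_cubicRight_eq_zero (ha : a ≠ 0) (hy : cubicRight a b y = 0) : y ≠ 0 := by
  rintro rfl
  exact pow_ne_zero 2 ha (by simpa [cubicRight] using hy)

theorem cubicRight_div_mul_sub (hd : a * x - b ≠ 0) :
    cubicRight a b (a / (a * x - b)) = a ^ 4 * cubicLeft a b x / (a * x - b) ^ 3 := by
  unfold cubicLeft cubicRight
  field_simp
  ring

theorem cubicLeft_add_div_mul (ha : a ≠ 0) (hy : y ≠ 0) :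
    cubicLeft a b ((b * y + a) / (a * y)) = a ^ 2 * cubicRight a b y / (a * y) ^ 3 := by
  unfold cubicLeft cubicRight
  field_simp
  ring

theorem add_div_mul_div_mul_sub (ha : a ≠ 0) (hd : a * x - b ≠ 0) :
    (b * (a / (a * x - b)) + a) / (a * (a / (a * x - b))) = x := by
  field_simp
  ring

theorem div_mul_add_div_mul_sub (ha : a ≠ 0) (hy : y ≠ 0) :
    a / (a * ((b * y + a) / (a * y)) - b) = y := by
  have hd : a * ((b * y + a) / (a * y)) - b = a / y := by
    field_simp
    ring
  rw [hd]
  field_simp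

end CubicRootBijection

open CubicRootBijection in
theorem stmt_0_general (F : Type*) [Field F] [Fintype F] [DecidableEq F]
    (a b : F) (ha : a ≠ 0) (hab : a ≠ -b) :
    (Finset.univ.filter fun x : F => a * x ^ 3 - b * x ^ 2 + x + 1 = 0).card =
      (Finset.univ.filter fun x : F =>
        (a + b) * x ^ 3 + (a + b ^ 2) * x ^ 2 + 2 * a * b * x + a ^ 2 = 0).card := by
  apply Finset.card_bij' (fun x _ => a / (a * x - b)) (fun y _ => (b * y + a) / (a * y))
  all_goals simp only [Finset.mem_filter, Finset.mem_univ, true_and]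
  · intro x (hx : cubicLeft a b x = 0)
    change cubicRight a b _ = 0
    rw [cubicRight_div_mul_sub (mul_sub_ne_zero_of_cubicLeft_eq_zero hab hx), hx, mul_zero,
      zero_div]
  · intro y (hy : cubicRight a b y = 0)
    change cubicLeft a b _ = 0
    rw [cubicLeft_add_div_mul ha (ne_zero_of_cubicRight_eq_zero ha hy), hy, mul_zero, zero_div]
  · intro x hx
    exact add_div_mul_div_mul_sub ha (mul_sub_ne_zero_of_cubicLeft_eq_zero hab hx)
  · intro y hy
    exact div_mul_add_div_mul_sub ha (ne_zero_of_cubicRight_eq_zero ha hy)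

theorem stmt_0 (F : Type*) [Field F] [Fintype F] [DecidableEq F]
    (a b : F) (ha : a ≠ 0) (hb : b ≠ 0) (hab : a ≠ -b) :
    (Finset.univ.filter fun x : F => a * x ^ 3 - b * x ^ 2 + x + 1 = 0).card =
      (Finset.univ.filter fun x : F =>
        (a + b) * x ^ 3 + (a + b ^ 2) * x ^ 2 + 2 * a * b * x + a ^ 2 = 0).card :=
  stmt_0_general F a b ha hab
end

section
/- Let F_q be a finite field and a ∈ F_q with a ≠ 0. Then the number of x ∈ F_q satisfying a*x^3 + a*x^2 + x + 1 = 0 is one more than the number of x ∈ F_q satisfying (a + a^2)*x^2 - 2*a^2*x + a^2 = 0. -/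
/-!
The cubic factors as `(x + 1) * (a * x ^ 2 + 1)`. For `a ≠ -1` the root `-1` is not a root of
`a * x ^ 2 + 1`, and the substitution `y = a * (x + 1) / (a + 1)` turns the quadratic into
`a ^ 2 / (a + 1) * (a * x ^ 2 + 1)`. For `a = -1` the cubic has roots `{1, -1}`
and the quadratic degenerates to `1 - 2 * y`; both counts then depend only on whether `2 = 0`.
-/

open Finset

lemma filter_cubic_eq_insert {R : Type*} [CommRing R] [NoZeroDivisors R] [Fintype R]
    [DecidableEq R] (a : R) :
    (univ.filter fun x : R => a * x ^ 3 + a * x ^ 2 + x + 1 = 0) =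
      insert (-1) (univ.filter fun x : R => a * x ^ 2 + 1 = 0) := by
  ext x
  have hfactor : a * x ^ 3 + a * x ^ 2 + x + 1 = (x + 1) * (a * x ^ 2 + 1) := by ring
  simp only [mem_filter, mem_univ, true_and, mem_insert]
  rw [hfactor, mul_eq_zero, add_eq_zero_iff_eq_neg]

section Field

variable {F : Type*} [Field F] [Fintype F] [DecidableEq F]

lemma card_sq_eq_one_eq_card_two_mul_eq_one_add_one :
    #(univ.filter fun x : F => x ^ 2 = 1) = #(univ.filter fun y : F => 2 * y = 1) + 1 := by
  have hsq : (univ.filter fun x : F => x ^ 2 = 1) = {1, -1} := by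
    ext x
    simp
  rw [hsq]
  by_cases h2 : (2 : F) = 0
  · have hneg : (-1 : F) = 1 := by linear_combination -h2
    have hlin : (univ.filter fun y : F => 2 * y = 1) = ∅ := by
      ext y
      simp [h2]
    simp [hneg, hlin]
  · have hlin : (univ.filter fun y : F => 2 * y = 1) = {2⁻¹} := by
      ext y
      simp only [mem_filter, mem_univ, true_and, mem_singleton]
      rw [mul_eq_one_iff_inv_eq₀ h2, eq_comm]
    have hne : (1 : F) ≠ -1 := fun h => h2 (by linear_combination h)
    rw [hlin, card_pair hne, card_singleton]

lemma card_quadratic_eq_card_mul_sq_add_one (a : F) (ha : a ≠ 0) (ha1 : a + 1 ≠ 0) :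
    #(univ.filter fun y : F => (a + a ^ 2) * y ^ 2 - 2 * a ^ 2 * y + a ^ 2 = 0) =
      #(univ.filter fun x : F => a * x ^ 2 + 1 = 0) := by
  have hc : a / (a + 1) ≠ 0 := div_ne_zero ha ha1
  refine (card_equiv ((Equiv.addRight 1).trans (Equiv.mulLeft₀ _ hc)) fun x => ?_).symm
  simp only [mem_filter, mem_univ, true_and, Equiv.trans_apply, Equiv.coe_addRight,
    Equiv.mulLeft₀_apply]
  have hsubst : (a + a ^ 2) * (a / (a + 1) * (x + 1)) ^ 2 - 2 * a ^ 2 * (a / (a + 1) * (x + 1))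
      + a ^ 2 = a ^ 2 / (a + 1) * (a * x ^ 2 + 1) := by
    field_simp
    ring
  rw [hsubst, mul_eq_zero, or_iff_right (div_ne_zero (pow_ne_zero 2 ha) ha1)]

end Field

theorem stmt_1 (F : Type*) [Field F] [Fintype F] [DecidableEq F]
    (a : F) (ha : a ≠ 0) :
    (Finset.univ.filter fun x : F => a * x ^ 3 + a * x ^ 2 + x + 1 = 0).card =
      (Finset.univ.filter fun x : F =>
        (a + a ^ 2) * x ^ 2 - 2 * a ^ 2 * x + a ^ 2 = 0).card + 1 := by
  rw [filter_cubic_eq_insert]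
  by_cases ha1 : a + 1 = 0
  · obtain rfl : a = -1 := eq_neg_of_add_eq_zero_left ha1
    rw [insert_eq_of_mem (by simp)]
    have hsq : (univ.filter fun x : F => -1 * x ^ 2 + 1 = 0) = univ.filter fun x => x ^ 2 = 1 :=
      filter_congr fun x _ => by rw [neg_one_mul, neg_add_eq_zero, eq_comm]
    have hlin : (univ.filter fun y : F =>
        (-1 + (-1) ^ 2) * y ^ 2 - 2 * (-1) ^ 2 * y + (-1) ^ 2 = 0) =
          univ.filter fun y => 2 * y = 1 :=
      filter_congr fun y _ =>
        ⟨fun h => by linear_combination -h, fun h => by linear_combination -h⟩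
    rw [hsq, hlin]
    exact card_sq_eq_one_eq_card_two_mul_eq_one_add_one
  · have hneg : (-1 : F) ∉ univ.filter fun x : F => a * x ^ 2 + 1 = 0 := by
      simpa only [mem_filter, mem_univ, true_and, neg_one_sq, mul_one] using ha1
    rw [card_insert_of_notMem hneg, card_quadratic_eq_card_mul_sq_add_one a ha ha1]
end

section
/- Let F_q be a finite field and a, b ∈ F_q both nonzero. Then the number of x ∈ F_q with a*x^3 - b*x^2 + 1 = 0 equals the number of x ∈ F_q with a*x^3 + b^2*x^2 + 2*a*b*x + a^2 = 0. -/
/-!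
The map `x ↦ -a x²` is a bijection from the roots of `a x³ - b x² + 1` onto those of
`a y³ + b² y² + 2ab y + a²`, with inverse `y ↦ (a + b y) / (a y)`: on the first root set
`a x³ = b x² - 1`, so `(a + b y) / (a y)` at `y = -a x²` equals `a x³ / (a x²) = x`.
-/

open Finset

section CubicRootCorrespondence

variable {F : Type*} [Field F] {a b : F}

lemma ne_zero_of_cubic_root {x : F} (hx : a * x ^ 3 - b * x ^ 2 + 1 = 0) : x ≠ 0 := by
  rintro rfl
  simp at hx

lemma ne_zero_of_dual_cubic_root (ha : a ≠ 0) {y : F}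
    (hy : a * y ^ 3 + b ^ 2 * y ^ 2 + 2 * a * b * y + a ^ 2 = 0) : y ≠ 0 := by
  rintro rfl
  exact ha (by simpa using hy)

lemma dual_cubic_root_of_cubic_root {x : F} (hx : a * x ^ 3 - b * x ^ 2 + 1 = 0) :
    a * (-a * x ^ 2) ^ 3 + b ^ 2 * (-a * x ^ 2) ^ 2 + 2 * a * b * (-a * x ^ 2) + a ^ 2 = 0 := by
  linear_combination (-a ^ 2 * (a * x ^ 3 + b * x ^ 2 - 1)) * hx

lemma cubic_root_of_dual_cubic_root (ha : a ≠ 0) {y : F}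
    (hy : a * y ^ 3 + b ^ 2 * y ^ 2 + 2 * a * b * y + a ^ 2 = 0) :
    a * ((a + b * y) / (a * y)) ^ 3 - b * ((a + b * y) / (a * y)) ^ 2 + 1 = 0 := by
  have hy0 := ne_zero_of_dual_cubic_root ha hy
  set x := (a + b * y) / (a * y) with hx
  have hsq : a * x ^ 2 = -y := by
    rw [hx]
    field_simp
    linear_combination hy
  have hlin : a * x * y = a + b * y := by
    rw [hx]
    field_simp
  have key : a ^ 2 * (a * x ^ 3 - b * x ^ 2 + 1) = 0 := by
    linear_combination (a ^ 2 * x - a * b) * hsq - a * hlin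
  exact (mul_eq_zero.mp key).resolve_left (pow_ne_zero 2 ha)

lemma inverse_map_cubic_root (ha : a ≠ 0) {x : F} (hx : a * x ^ 3 - b * x ^ 2 + 1 = 0) :
    (a + b * (-a * x ^ 2)) / (a * (-a * x ^ 2)) = x := by
  have hx0 := ne_zero_of_cubic_root hx
  field_simp
  linear_combination -hx

lemma map_inverse_dual_cubic_root (ha : a ≠ 0) {y : F}
    (hy : a * y ^ 3 + b ^ 2 * y ^ 2 + 2 * a * b * y + a ^ 2 = 0) :
    -a * ((a + b * y) / (a * y)) ^ 2 = y := by
  have hy0 := ne_zero_of_dual_cubic_root ha hy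
  field_simp
  linear_combination -hy

end CubicRootCorrespondence

theorem stmt_2_general (F : Type*) [Field F] [Fintype F] [DecidableEq F]
    (a b : F) (ha : a ≠ 0) :
    (Finset.univ.filter fun x : F => a * x ^ 3 - b * x ^ 2 + 1 = 0).card =
      (Finset.univ.filter fun x : F =>
        a * x ^ 3 + b ^ 2 * x ^ 2 + 2 * a * b * x + a ^ 2 = 0).card := by
  apply card_nbij' (fun x => -a * x ^ 2) (fun y => (a + b * y) / (a * y))
  · intro x hx
    simp only [coe_filter, mem_univ, true_and] at hx ⊢
    exact dual_cubic_root_of_cubic_root hx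
  · intro y hy
    simp only [coe_filter, mem_univ, true_and] at hy ⊢
    exact cubic_root_of_dual_cubic_root ha hy
  · intro x hx
    simp only [coe_filter, mem_univ, true_and] at hx
    exact inverse_map_cubic_root ha hx
  · intro y hy
    simp only [coe_filter, mem_univ, true_and] at hy
    exact map_inverse_dual_cubic_root ha hy

theorem stmt_2 (F : Type*) [Field F] [Fintype F] [DecidableEq F]
    (a b : F) (ha : a ≠ 0) (hb : b ≠ 0) :
    (Finset.univ.filter fun x : F => a * x ^ 3 - b * x ^ 2 + 1 = 0).card =
      (Finset.univ.filter fun x : F =>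
        a * x ^ 3 + b ^ 2 * x ^ 2 + 2 * a * b * x + a ^ 2 = 0).card :=
  stmt_2_general F a b ha
end

section
/- Let F_q be a finite field and a, b ∈ F_q with a ≠ 0 and b ≠ 0. The number of quadruples (u, v, x, y) ∈ F_q^4 satisfying both equations (i) -y - u*v + a*u*x*y - b*u*v*x - a*v*x^2 + b*u^2*y = 0 and (ii) -(1 + b*x)*v^2 - y*(a*x - b*u)*v + a*u*y^2 = 0, is equal to q^2 + (q^2 - q)*N, where N is the number of w ∈ F_q with a*w^3 + b^2*w^2 + 2*a*b*w + a^2 = 0. -/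
/-! Dehomogenize on the chart `y ≠ 0` by writing `v = t * y`: equation (i) becomes `y` times,
and (ii) `y²` times, an equation in `(u, t, x)`, the second of which is
`u * (a + b * t) = t * ((1 + b * x) * t + a * x)`. Modulo that one, `(a + b * t)²` times the
first is minus the cubic of `V_{7,a,b}` at `t`, and `a + b * t ≠ 0` at its roots, so the
solutions with `y ≠ 0` are parametrized by `(y, x, t)` with `y ≠ 0` and `t` a root.
On `y = 0` the system forces `v = 0`, leaving the `q²` points `(u, 0, x, 0)`. -/

open Finset

namespace M7

variable {F : Type*} [Field F] {a b u v x y t : F}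

abbrev IsSolution (a b u v x y : F) : Prop :=
  -y - u * v + a * u * x * y - b * u * v * x - a * v * x ^ 2 + b * u ^ 2 * y = 0 ∧
    -(1 + b * x) * v ^ 2 - y * (a * x - b * u) * v + a * u * y ^ 2 = 0

abbrev IsCubicRoot (a b w : F) : Prop :=
  a * w ^ 3 + b ^ 2 * w ^ 2 + 2 * a * b * w + a ^ 2 = 0

theorem IsCubicRoot.add_mul_ne_zero (ha : a ≠ 0) (ht : IsCubicRoot a b t) : a + b * t ≠ 0 := by
  intro hab
  have hbt : b * t ^ 4 = 0 := by linear_combination -ht + (t ^ 3 + (a + b * t)) * hab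
  rcases mul_eq_zero.1 hbt with hb | ht0
  · exact ha (by simpa [hb] using hab)
  · exact ha (by simpa [pow_eq_zero_iff four_ne_zero |>.1 ht0] using hab)

theorem isSolution_zero_iff (ha : a ≠ 0) : IsSolution a b u v x 0 ↔ v = 0 := by
  refine ⟨fun ⟨h₁, h₂⟩ => ?_, fun hv => by subst hv; constructor <;> ring⟩
  by_contra hv
  have hbx : 1 + b * x = 0 :=
    (mul_eq_zero.1 (by linear_combination -h₂ : (1 + b * x) * v ^ 2 = 0)).resolve_right
      (pow_ne_zero 2 hv)
  have hax : a * x ^ 2 = 0 :=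
    (mul_eq_zero.1 (by linear_combination -h₁ - v * u * hbx : v * (a * x ^ 2) = 0)).resolve_left
      hv
  have hx : x = 0 := pow_eq_zero_iff two_ne_zero |>.1 ((mul_eq_zero.1 hax).resolve_left ha)
  simp [hx] at hbx

abbrev IsChartSolution (a b u t x : F) : Prop :=
  -1 - u * t + a * u * x - b * u * t * x - a * t * x ^ 2 + b * u ^ 2 = 0 ∧
    u * (a + b * t) = t * ((1 + b * x) * t + a * x)

theorem isSolution_mul_iff_isChartSolution (hy : y ≠ 0) :
    IsSolution a b u (t * y) x y ↔ IsChartSolution a b u t x := by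
  refine and_congr ⟨fun h => ?_, fun h => by linear_combination y * h⟩
    ⟨fun h => ?_, fun h => by linear_combination y ^ 2 * h⟩
  · exact (mul_eq_zero.1 (by linear_combination h)).resolve_left hy
  · refine sub_eq_zero.1 <| (mul_eq_zero.1 ?_).resolve_left (pow_ne_zero 2 hy)
    linear_combination h

theorem isChartSolution_iff (ha : a ≠ 0) :
    IsChartSolution a b u t x ↔
      IsCubicRoot a b t ∧ u = t * ((1 + b * x) * t + a * x) / (a + b * t) := by
  set K := b * (u * (a + b * t) + t * ((1 + b * x) * t + a * x)) +
    (a * x - t - b * t * x) * (a + b * t)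
  constructor
  · rintro ⟨h₁, h₂⟩
    have hV : IsCubicRoot a b t := by linear_combination -(a + b * t) ^ 2 * h₁ + K * h₂
    exact ⟨hV, eq_div_of_mul_eq (hV.add_mul_ne_zero ha) h₂⟩
  · rintro ⟨hV, hu⟩
    have hab := hV.add_mul_ne_zero ha
    have h₂ : u * (a + b * t) = t * ((1 + b * x) * t + a * x) := by
      rw [hu, div_mul_cancel₀ _ hab]
    refine ⟨(mul_eq_zero.1 ?_).resolve_left (pow_ne_zero 2 hab), h₂⟩
    linear_combination -hV + K * h₂

theorem isSolution_mul_iff (ha : a ≠ 0) (hy : y ≠ 0) :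
    IsSolution a b u (t * y) x y ↔
      IsCubicRoot a b t ∧ u = t * ((1 + b * x) * t + a * x) / (a + b * t) :=
  (isSolution_mul_iff_isChartSolution hy).trans (isChartSolution_iff ha)

variable [Fintype F] [DecidableEq F]

theorem card_isSolution_and_eq_zero (ha : a ≠ 0) :
    #(univ.filter fun p : F × F × F × F =>
        IsSolution a b p.1 p.2.1 p.2.2.1 p.2.2.2 ∧ p.2.2.2 = 0) =
      Fintype.card F ^ 2 := by
  have h : (univ.filter fun p : F × F × F × F =>
      IsSolution a b p.1 p.2.1 p.2.2.1 p.2.2.2 ∧ p.2.2.2 = 0) =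
        univ ×ˢ {0} ×ˢ univ ×ˢ {0} := by
    ext ⟨u, v, x, y⟩
    simp only [mem_filter, mem_univ, true_and, mem_product, mem_singleton]
    constructor
    · rintro ⟨h, rfl⟩
      exact ⟨(isSolution_zero_iff ha).1 h, rfl⟩
    · rintro ⟨rfl, rfl⟩
      exact ⟨(isSolution_zero_iff ha).2 rfl, rfl⟩
  rw [h, card_product, card_product, card_product, card_singleton, card_univ]
  ring

theorem card_isSolution_and_ne_zero (ha : a ≠ 0) :
    #(univ.filter fun p : F × F × F × F =>
        IsSolution a b p.1 p.2.1 p.2.2.1 p.2.2.2 ∧ p.2.2.2 ≠ 0) =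
      (Fintype.card F ^ 2 - Fintype.card F) * #(univ.filter (IsCubicRoot a b)) := by
  have h : #(univ.filter fun p : F × F × F × F =>
      IsSolution a b p.1 p.2.1 p.2.2.1 p.2.2.2 ∧ p.2.2.2 ≠ 0) =
        #(({0}ᶜ : Finset F) ×ˢ (univ : Finset F) ×ˢ univ.filter (IsCubicRoot a b)) := by
    refine card_nbij' (fun p => (p.2.2.2, p.2.2.1, p.2.1 / p.2.2.2))
      (fun z => (z.2.2 * ((1 + b * z.2.1) * z.2.2 + a * z.2.1) / (a + b * z.2.2),
        z.2.2 * z.1, z.2.1, z.1)) ?_ ?_ ?_ ?_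
    · rintro ⟨u, v, x, y⟩ hp
      simp only [mem_coe, mem_filter, mem_product, mem_compl, mem_singleton, mem_univ, true_and]
        at hp ⊢
      obtain ⟨hs, hy⟩ := hp
      rw [← div_mul_cancel₀ v hy, isSolution_mul_iff ha hy] at hs
      exact ⟨hy, hs.1⟩
    · rintro ⟨y, x, t⟩ hz
      simp only [mem_coe, mem_filter, mem_product, mem_compl, mem_singleton, mem_univ, true_and]
        at hz ⊢
      obtain ⟨hy, ht⟩ := hz
      exact ⟨(isSolution_mul_iff ha hy).2 ⟨ht, rfl⟩, hy⟩
    · rintro ⟨u, v, x, y⟩ hp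
      obtain ⟨-, hs, hy⟩ := mem_filter.1 hp
      rw [← div_mul_cancel₀ v hy, isSolution_mul_iff ha hy] at hs
      simp only [div_mul_cancel₀ v hy, ← hs.2]
    · rintro ⟨y, x, t⟩ hz
      have hy : y ≠ 0 := by simpa using (mem_product.1 hz).1
      simp only [mul_div_cancel_right₀ t hy]
  rw [h, card_product, card_product, card_compl, card_singleton, card_univ, ← mul_assoc]
  congr 1
  rw [Nat.sub_one_mul, sq]

end M7

theorem stmt_7_general (F : Type*) [Field F] [Fintype F] [DecidableEq F]
    (a b : F) (ha : a ≠ 0) :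
    (Finset.univ.filter fun p : F × F × F × F =>
        -p.2.2.2 - p.1 * p.2.1 + a * p.1 * p.2.2.1 * p.2.2.2
          - b * p.1 * p.2.1 * p.2.2.1 - a * p.2.1 * p.2.2.1 ^ 2
          + b * p.1 ^ 2 * p.2.2.2 = 0 ∧
        -(1 + b * p.2.2.1) * p.2.1 ^ 2
          - p.2.2.2 * (a * p.2.2.1 - b * p.1) * p.2.1
          + a * p.1 * p.2.2.2 ^ 2 = 0).card =
      Fintype.card F ^ 2 + (Fintype.card F ^ 2 - Fintype.card F) *
        (Finset.univ.filter fun w : F =>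
          a * w ^ 3 + b ^ 2 * w ^ 2 + 2 * a * b * w + a ^ 2 = 0).card := by
  have hsplit := card_filter_add_card_filter_not (p := fun p : F × F × F × F => p.2.2.2 = 0)
    (s := univ.filter fun p : F × F × F × F => M7.IsSolution a b p.1 p.2.1 p.2.2.1 p.2.2.2)
  rw [filter_filter, filter_filter, M7.card_isSolution_and_eq_zero ha,
    M7.card_isSolution_and_ne_zero ha] at hsplit
  -- the abbreviations `IsSolution` and `IsCubicRoot` unfold to the filters of the statement
  exact hsplit.symm

theorem stmt_7 (F : Type*) [Field F] [Fintype F] [DecidableEq F]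
    (a b : F) (ha : a ≠ 0) (hb : b ≠ 0) :
    (Finset.univ.filter fun p : F × F × F × F =>
        -p.2.2.2 - p.1 * p.2.1 + a * p.1 * p.2.2.1 * p.2.2.2
          - b * p.1 * p.2.1 * p.2.2.1 - a * p.2.1 * p.2.2.1 ^ 2
          + b * p.1 ^ 2 * p.2.2.2 = 0 ∧
        -(1 + b * p.2.2.1) * p.2.1 ^ 2
          - p.2.2.2 * (a * p.2.2.1 - b * p.1) * p.2.1
          + a * p.1 * p.2.2.2 ^ 2 = 0).card =
      Fintype.card F ^ 2 + (Fintype.card F ^ 2 - Fintype.card F) *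
        (Finset.univ.filter fun w : F =>
          a * w ^ 3 + b ^ 2 * w ^ 2 + 2 * a * b * w + a ^ 2 = 0).card :=
  stmt_7_general F a b ha
end

section
/- Let F_q be a finite field and a, b ∈ F_q with a ≠ 0, b ≠ 0, a ≠ -b. The number of quadruples (u, v, x, y) ∈ F_q^4 satisfying both (i) -y + v*x - u*y - u*v + a*u*x*y - b*u*v*x - a*v*x^2 + b*u^2*y = 0 and (ii) -(1 + b*x)*v^2 - y*(a*x - b*u)*v + a*u*y^2 = 0, equals q^2 + (q^2 - q)*N, where N is the number of w ∈ F_q with (a+b)*w^3 + (a+b^2)*w^2 + 2*a*b*w + a^2 = 0. -/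
open Finset

/-!
Slice the solution set by `v`. On `v = 0` the second equation reduces to `a u y² = 0` and then the
first one forces `y = 0`, leaving the free plane `(u, x)`. On `v ≠ 0` put `y = s v`: the second
equation becomes `(u s - x)(b + a s) = 1`, which determines `x`, and the first one then reduces to
the reversed cubic `(a + b) + (a + b²) s + 2ab s² + a² s³ = 0`, with `u`, `v` free. Since
`a ≠ 0` and `a + b ≠ 0`, `s ↦ s⁻¹` matches the roots of the reversed cubic with those of `V⁽³⁾₆`.
-/

namespace M6

variable {F : Type*} [Field F]

-- The two equations of `M⁶_{a,b}` in the coordinates `(u, v, x, y)`.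
def eqn₁ (a b u v x y : F) : F :=
  -y + v * x - u * y - u * v + a * u * x * y - b * u * v * x - a * v * x ^ 2 + b * u ^ 2 * y

def eqn₂ (a b u v x y : F) : F :=
  -(1 + b * x) * v ^ 2 - y * (a * x - b * u) * v + a * u * y ^ 2

def cubic (a b w : F) : F :=
  (a + b) * w ^ 3 + (a + b ^ 2) * w ^ 2 + 2 * a * b * w + a ^ 2

def revCubic (a b s : F) : F :=
  (a + b) + (a + b ^ 2) * s + 2 * a * b * s ^ 2 + a ^ 2 * s ^ 3

section Cubic

variable {a b : F}

theorem revCubic_eq_mul_add (s : F) :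
    revCubic a b s = (b + a * s) * (a * s ^ 2 + b * s + 1) + a := by
  unfold revCubic; ring

theorem revCubic_eq_pow_mul_cubic_inv {s : F} (hs : s ≠ 0) :
    revCubic a b s = s ^ 3 * cubic a b s⁻¹ := by
  unfold revCubic cubic; field_simp

theorem add_mul_ne_zero_of_revCubic_eq_zero (ha : a ≠ 0) {s : F} (hs : revCubic a b s = 0) :
    b + a * s ≠ 0 := by
  intro hc
  rw [revCubic_eq_mul_add, hc, zero_mul, zero_add] at hs
  exact ha hs

theorem card_revCubic_roots [Fintype F] [DecidableEq F] (ha : a ≠ 0) (hab : a ≠ -b) :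
    #{s | revCubic a b s = 0} = #{w | cubic a b w = 0} := by
  have hrev0 : revCubic a b 0 ≠ 0 := by
    simpa [revCubic, eq_neg_iff_add_eq_zero] using hab
  have hcub0 : cubic a b 0 ≠ 0 := by simpa [cubic] using ha
  apply card_nbij' (·⁻¹) (·⁻¹)
  · intro s hs
    simp only [coe_filter, mem_univ, true_and, Set.mem_ofPred_eq] at hs ⊢
    have hs0 : s ≠ 0 := by rintro rfl; exact hrev0 hs
    rwa [revCubic_eq_pow_mul_cubic_inv hs0, mul_eq_zero, or_iff_right (pow_ne_zero 3 hs0)] at hs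
  · intro w hw
    simp only [coe_filter, mem_univ, true_and, Set.mem_ofPred_eq] at hw ⊢
    have hw0 : w ≠ 0 := by rintro rfl; exact hcub0 hw
    rw [revCubic_eq_pow_mul_cubic_inv (inv_ne_zero hw0), inv_inv, hw, mul_zero]
  · intro s _; exact inv_inv s
  · intro w _; exact inv_inv w

end Cubic

section Slices

variable {a b : F}

theorem eqns_zero_iff_of_v_eq_zero (ha : a ≠ 0) (u x y : F) :
    eqn₁ a b u 0 x y = 0 ∧ eqn₂ a b u 0 x y = 0 ↔ y = 0 := by
  constructor
  · rintro ⟨h₁, h₂⟩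
    by_contra hy
    have hu : u = 0 := by
      have : a * u * y ^ 2 = 0 := by unfold eqn₂ at h₂; linear_combination h₂
      simpa [ha, hy] using this
    subst hu
    exact hy (by unfold eqn₁ at h₁; linear_combination -h₁)
  · rintro rfl
    constructor <;> simp only [eqn₁, eqn₂] <;> ring

theorem eqn₂_mul_right (u v x s : F) :
    eqn₂ a b u v x (s * v) = v ^ 2 * ((u * s - x) * (b + a * s) - 1) := by
  unfold eqn₂; ring

theorem eqn₁_sub_inv_mul_right (u v s : F) (hc : b + a * s ≠ 0) :
    eqn₁ a b u v (u * s - (b + a * s)⁻¹) (s * v) = -(v / (b + a * s) ^ 2) * revCubic a b s := by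
  obtain ⟨c, rfl⟩ : ∃ c, b = c - a * s := ⟨b + a * s, by ring⟩
  rw [sub_add_cancel] at hc ⊢
  unfold eqn₁ revCubic; field_simp; ring

theorem eqns_mul_right_iff (ha : a ≠ 0) {v : F} (hv : v ≠ 0) (u x s : F) :
    eqn₁ a b u v x (s * v) = 0 ∧ eqn₂ a b u v x (s * v) = 0 ↔
      revCubic a b s = 0 ∧ x = u * s - (b + a * s)⁻¹ := by
  constructor
  · rintro ⟨h₁, h₂⟩
    rw [eqn₂_mul_right, mul_eq_zero, or_iff_right (pow_ne_zero 2 hv), sub_eq_zero] at h₂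
    have hc : b + a * s ≠ 0 := right_ne_zero_of_mul_eq_one h₂
    have hx : x = u * s - (b + a * s)⁻¹ := by
      rw [← eq_inv_of_mul_eq_one_left h₂]; ring
    subst hx
    rw [eqn₁_sub_inv_mul_right u v s hc, mul_eq_zero, neg_eq_zero] at h₁
    exact ⟨h₁.resolve_left (div_ne_zero hv (pow_ne_zero 2 hc)), rfl⟩
  · rintro ⟨hs, rfl⟩
    have hc := add_mul_ne_zero_of_revCubic_eq_zero ha hs
    refine ⟨by rw [eqn₁_sub_inv_mul_right u v s hc, hs, mul_zero], ?_⟩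
    rw [eqn₂_mul_right, sub_sub_cancel, inv_mul_cancel₀ hc, sub_self, mul_zero]

end Slices

section Count

variable [Fintype F] [DecidableEq F] {a b : F}

def solutions (a b : F) : Finset (F × F × F × F) :=
  {p | eqn₁ a b p.1 p.2.1 p.2.2.1 p.2.2.2 = 0 ∧ eqn₂ a b p.1 p.2.1 p.2.2.1 p.2.2.2 = 0}

theorem mem_solutions {p : F × F × F × F} :
    p ∈ solutions a b ↔
      eqn₁ a b p.1 p.2.1 p.2.2.1 p.2.2.2 = 0 ∧ eqn₂ a b p.1 p.2.1 p.2.2.1 p.2.2.2 = 0 := by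
  simp [solutions]

theorem card_solutions_filter_v_eq_zero (ha : a ≠ 0) :
    #{p ∈ solutions a b | p.2.1 = 0} = Fintype.card F ^ 2 := by
  rw [sq, ← Fintype.card_prod, ← card_univ]
  apply card_nbij' (fun p => (p.1, p.2.2.1)) (fun t => (t.1, 0, t.2, 0))
  · intro p _; exact mem_coe.2 (mem_univ _)
  · rintro ⟨u, x⟩ -
    rw [mem_coe, mem_filter, mem_solutions]
    exact ⟨(eqns_zero_iff_of_v_eq_zero ha u x 0).2 rfl, rfl⟩
  · rintro ⟨u, v, x, y⟩ hp
    simp only [mem_coe, mem_filter, mem_solutions] at hp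
    obtain ⟨heqns, rfl⟩ := hp
    rw [(eqns_zero_iff_of_v_eq_zero ha u x y).1 heqns]
  · intro t _; rfl

theorem card_solutions_filter_v_ne_zero (ha : a ≠ 0) :
    #{p ∈ solutions a b | p.2.1 ≠ 0} =
      (Fintype.card F - 1) * Fintype.card F * #{s | revCubic a b s = 0} := by
  have hunits : #{v : F | v ≠ 0} = Fintype.card F - 1 := by
    rw [filter_ne' univ 0, card_erase_of_mem (mem_univ 0), card_univ]
  rw [mul_assoc, ← hunits, ← card_univ, ← card_product, ← card_product]
  apply card_nbij' (fun p => (p.2.1, p.1, p.2.2.2 / p.2.1))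
    (fun t => (t.2.1, t.1, t.2.1 * t.2.2 - (b + a * t.2.2)⁻¹, t.2.2 * t.1))
  · rintro ⟨u, v, x, y⟩ hp
    simp only [mem_coe, mem_filter, mem_solutions] at hp
    obtain ⟨heqns, hv⟩ := hp
    rw [← div_mul_cancel₀ y hv, eqns_mul_right_iff ha hv] at heqns
    simp [hv, heqns.1]
  · rintro ⟨v, u, s⟩ ht
    simp only [coe_product, coe_univ, coe_filter, mem_univ, true_and, Set.mem_prod,
      Set.mem_ofPred_eq, Set.mem_univ] at ht
    rw [mem_coe, mem_filter, mem_solutions]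
    exact ⟨(eqns_mul_right_iff ha ht.1 u _ s).2 ⟨ht.2, rfl⟩, ht.1⟩
  · rintro ⟨u, v, x, y⟩ hp
    simp only [mem_coe, mem_filter, mem_solutions] at hp
    obtain ⟨heqns, hv⟩ := hp
    rw [← div_mul_cancel₀ y hv, eqns_mul_right_iff ha hv] at heqns
    simp only [heqns.2, div_mul_cancel₀ y hv]
  · rintro ⟨v, u, s⟩ ht
    simp only [coe_product, coe_univ, coe_filter, mem_univ, true_and, Set.mem_prod,
      Set.mem_ofPred_eq, Set.mem_univ] at ht
    simp only [mul_div_cancel_right₀ s ht.1]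

end Count

end M6

theorem stmt_8_general (F : Type*) [Field F] [Fintype F] [DecidableEq F]
    (a b : F) (ha : a ≠ 0) (hab : a ≠ -b) :
    (Finset.univ.filter fun p : F × F × F × F =>
        -p.2.2.2 + p.2.1 * p.2.2.1 - p.1 * p.2.2.2 - p.1 * p.2.1
          + a * p.1 * p.2.2.1 * p.2.2.2 - b * p.1 * p.2.1 * p.2.2.1
          - a * p.2.1 * p.2.2.1 ^ 2 + b * p.1 ^ 2 * p.2.2.2 = 0 ∧
        -(1 + b * p.2.2.1) * p.2.1 ^ 2
          - p.2.2.2 * (a * p.2.2.1 - b * p.1) * p.2.1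
          + a * p.1 * p.2.2.2 ^ 2 = 0).card =
      Fintype.card F ^ 2 + (Fintype.card F ^ 2 - Fintype.card F) *
        (Finset.univ.filter fun w : F =>
          (a + b) * w ^ 3 + (a + b ^ 2) * w ^ 2 + 2 * a * b * w + a ^ 2 = 0).card := by
  change #(M6.solutions a b) = _ + _ * #{w | M6.cubic a b w = 0}
  rw [← card_filter_add_card_filter_not (s := M6.solutions a b) (p := fun p => p.2.1 = 0),
    M6.card_solutions_filter_v_eq_zero ha, M6.card_solutions_filter_v_ne_zero ha,
    M6.card_revCubic_roots ha hab, Nat.sub_one_mul, sq]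

theorem stmt_8 (F : Type*) [Field F] [Fintype F] [DecidableEq F]
    (a b : F) (ha : a ≠ 0) (hb : b ≠ 0) (hab : a ≠ -b) :
    (Finset.univ.filter fun p : F × F × F × F =>
        -p.2.2.2 + p.2.1 * p.2.2.1 - p.1 * p.2.2.2 - p.1 * p.2.1
          + a * p.1 * p.2.2.1 * p.2.2.2 - b * p.1 * p.2.1 * p.2.2.1
          - a * p.2.1 * p.2.2.1 ^ 2 + b * p.1 ^ 2 * p.2.2.2 = 0 ∧
        -(1 + b * p.2.2.1) * p.2.1 ^ 2
          - p.2.2.2 * (a * p.2.2.1 - b * p.1) * p.2.1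
          + a * p.1 * p.2.2.2 ^ 2 = 0).card =
      Fintype.card F ^ 2 + (Fintype.card F ^ 2 - Fintype.card F) *
        (Finset.univ.filter fun w : F =>
          (a + b) * w ^ 3 + (a + b ^ 2) * w ^ 2 + 2 * a * b * w + a ^ 2 = 0).card :=
  stmt_8_general F a b ha hab
end

section
/- Let F_q be a finite field and a, b ∈ F_q with a ≠ 0. The number of triples (y, z, w) ∈ F_q^3 satisfying -z^2 + y*w = 0, a*y^2 + b*y*z - z*w = 0, and a*y*z + b*z^2 - w^2 = 0, equals 1 + (q - 1)*N, where N is the number of x ∈ F_q with a*x^3 - b*x^2 + 1 = 0. -/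
/-!
Off the origin every solution has `z ≠ 0` (when `z = 0` the equations force `a y² = 0` and `w² = 0`),
and then `y ≠ 0` and `w = z² / y`; substituting, the system collapses to the cubic
`a y³ + b y² z - z³ = 0`, i.e. to `x = -y / z` being a root of `a x³ - b x² + 1`. Conversely
`(z, x) ↦ (-x z, z, -z / x)` sends each pair of a nonzero `z` and a root `x` to a solution, injectively.
-/

open Finset

section

variable {F : Type*} [Field F]

def IsSolution (a b : F) (p : F × F × F) : Prop :=
  -p.2.1 ^ 2 + p.1 * p.2.2 = 0 ∧
    a * p.1 ^ 2 + b * p.1 * p.2.1 - p.2.1 * p.2.2 = 0 ∧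
    a * p.1 * p.2.1 + b * p.2.1 ^ 2 - p.2.2 ^ 2 = 0

instance [DecidableEq F] (a b : F) : DecidablePred (IsSolution a b) :=
  fun _ => inferInstanceAs (Decidable (_ ∧ _ ∧ _))

def solutionOfRoot (p : F × F) : F × F × F := (-p.2 * p.1, p.1, -p.1 / p.2)

lemma ne_zero_of_cubic_eq_zero {a b x : F} (hx : a * x ^ 3 - b * x ^ 2 + 1 = 0) : x ≠ 0 := by
  rintro rfl
  simp at hx

lemma isSolution_zero {a b : F} : IsSolution a b 0 := by
  simp [IsSolution]

lemma isSolution_solutionOfRoot {a b z x : F} (hx : a * x ^ 3 - b * x ^ 2 + 1 = 0) :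
    IsSolution a b (solutionOfRoot (z, x)) := by
  have hx0 := ne_zero_of_cubic_eq_zero hx
  refine ⟨?_, ?_, ?_⟩ <;> dsimp [solutionOfRoot] <;> field_simp
  · ring
  · linear_combination z ^ 2 * hx
  · linear_combination -z ^ 2 * hx

lemma eq_zero_of_isSolution_of_snd_eq_zero {a b y w : F} (ha : a ≠ 0)
    (h : IsSolution a b (y, 0, w)) : (y, (0 : F), w) = 0 := by
  obtain ⟨-, h₂, h₃⟩ := h
  have hy : a * y ^ 2 = 0 := by linear_combination h₂
  have hw : w ^ 2 = 0 := by linear_combination -h₃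
  simp_all

lemma cubic_eq_zero_and_solutionOfRoot_eq {a b y z w : F} (hz : z ≠ 0)
    (h : IsSolution a b (y, z, w)) :
    a * (-y / z) ^ 3 - b * (-y / z) ^ 2 + 1 = 0 ∧ solutionOfRoot (z, -y / z) = (y, z, w) := by
  obtain ⟨h₁, h₂, -⟩ := h
  have hy : y ≠ 0 := by
    rintro rfl
    exact hz (pow_eq_zero_iff two_ne_zero |>.mp (by linear_combination -h₁))
  have hcubic : a * y ^ 3 + b * y ^ 2 * z - z ^ 3 = 0 := by linear_combination y * h₂ + z * h₁
  refine ⟨?_, ?_⟩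
  · field_simp
    linear_combination -hcubic
  · simp only [solutionOfRoot, Prod.mk.injEq]
    refine ⟨by field_simp, trivial, ?_⟩
    field_simp
    linear_combination -h₁

lemma solutionOfRoot_injOn : Set.InjOn (solutionOfRoot (F := F)) {p | p.1 ≠ 0} := by
  rintro ⟨z, x⟩ hz ⟨z', x'⟩ - h
  simp only [solutionOfRoot, Prod.mk.injEq] at h
  obtain ⟨h₁, rfl, -⟩ := h
  rw [neg_inj.mp (mul_right_cancel₀ hz h₁)]

variable [DecidableEq F]

lemma zero_notMem_image_solutionOfRoot (s : Finset (F × F)) (hs : ∀ p ∈ s, p.1 ≠ 0) :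
    0 ∉ s.image solutionOfRoot := by
  simp only [mem_image, not_exists, not_and]
  exact fun p hp h => hs p hp (congrArg (·.2.1) h)

variable [Fintype F]

lemma filter_isSolution_eq {a b : F} (ha : a ≠ 0) :
    univ.filter (IsSolution a b) =
      insert 0 (((univ.filter (· ≠ (0 : F))) ×ˢ
        univ.filter fun x : F => a * x ^ 3 - b * x ^ 2 + 1 = 0).image solutionOfRoot) := by
  ext ⟨y, z, w⟩
  simp only [mem_filter, mem_univ, true_and, mem_insert, mem_image, mem_product, Prod.exists]
  constructor
  · intro h
    by_cases hz : z = 0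
    · subst hz
      exact .inl (eq_zero_of_isSolution_of_snd_eq_zero ha h)
    · obtain ⟨hroot, heq⟩ := cubic_eq_zero_and_solutionOfRoot_eq hz h
      exact .inr ⟨z, -y / z, ⟨hz, hroot⟩, heq⟩
  · rintro (h | ⟨z, x, ⟨-, hx⟩, h⟩)
    · exact h ▸ isSolution_zero
    · exact h ▸ isSolution_solutionOfRoot hx

end

theorem stmt_17 (F : Type*) [Field F] [Fintype F] [DecidableEq F]
    (a b : F) (ha : a ≠ 0) :
    (Finset.univ.filter fun p : F × F × F =>
        -p.2.1 ^ 2 + p.1 * p.2.2 = 0 ∧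
        a * p.1 ^ 2 + b * p.1 * p.2.1 - p.2.1 * p.2.2 = 0 ∧
        a * p.1 * p.2.1 + b * p.2.1 ^ 2 - p.2.2 ^ 2 = 0).card =
      1 + (Fintype.card F - 1) *
        (Finset.univ.filter fun x : F => a * x ^ 3 - b * x ^ 2 + 1 = 0).card := by
  have hparams : ∀ p ∈ (univ.filter (· ≠ (0 : F))) ×ˢ
      univ.filter fun x : F => a * x ^ 3 - b * x ^ 2 + 1 = 0, p.1 ≠ 0 :=
    fun p hp => (mem_filter.mp (mem_product.mp hp).1).2
  change (univ.filter (IsSolution a b)).card = _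
  rw [filter_isSolution_eq ha, card_insert_of_notMem (zero_notMem_image_solutionOfRoot _ hparams),
    card_image_of_injOn (solutionOfRoot_injOn.mono hparams), card_product, filter_ne' univ 0,
    card_erase_of_mem (mem_univ 0), card_univ, add_comm]
end
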